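/- arXiv:2301.06749 — 2 statements merged into one kernel-verified Lean document; each statement's English description precedes it below -/
import Mathlib

section
/- If two straight-line trajectories h_i(t) = g_i + t(f_i - g_i) and h_j(t) = g_j + t(f_j - g_j), t ∈ [0,1], satisfy ‖g_i - g_j‖ ≥ 2√2 r and ‖f_i - f_j‖ ≥ 2√2 r, and additionally ⟨g_i - g_j, f_i - f_j⟩ ≥ 0, then ‖h_i(t) - h_j(t)‖ ≥ 2r for all t ∈ [0,1], i.e., the two UAVs of radius r never collide. -/
/-!
The relative position `(1 - t) • (gi - gj) + t • (fi - fj)` is a convex combination of two vectors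
making a non-obtuse angle, so its squared norm is at least `(1 - t)² ‖gi - gj‖² + t² ‖fi - fj‖²`.
Both squared norms are at least `8 r²`, and `(1 - t)² + t² ≥ 1 / 2`, which leaves `4 r²`.
-/

open RealInnerProductSpace

section ConvexCombination

variable {E : Type*} [NormedAddCommGroup E] [InnerProductSpace ℝ E] {u v : E} {t : ℝ}

theorem sq_mul_norm_sq_add_le_norm_convexComb_sq (huv : 0 ≤ ⟪u, v⟫) (ht0 : 0 ≤ t)
    (ht1 : t ≤ 1) :
    (1 - t) ^ 2 * ‖u‖ ^ 2 + t ^ 2 * ‖v‖ ^ 2 ≤ ‖(1 - t) • u + t • v‖ ^ 2 := by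
  have hcross : 0 ≤ 2 * ((1 - t) * t) * ⟪u, v⟫ := by
    have : 0 ≤ 1 - t := by linarith
    positivity
  calc (1 - t) ^ 2 * ‖u‖ ^ 2 + t ^ 2 * ‖v‖ ^ 2
      ≤ (1 - t) ^ 2 * ‖u‖ ^ 2 + 2 * ((1 - t) * t) * ⟪u, v⟫ + t ^ 2 * ‖v‖ ^ 2 := by linarith
    _ = ‖(1 - t) • u + t • v‖ ^ 2 := by
      rw [norm_add_sq_real, real_inner_smul_left, real_inner_smul_right, norm_smul, norm_smul,
        mul_pow, mul_pow, Real.norm_eq_abs, Real.norm_eq_abs, sq_abs, sq_abs]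
      ring

theorem half_sq_le_norm_convexComb_sq {c : ℝ} (hc : 0 ≤ c) (hu : c ≤ ‖u‖) (hv : c ≤ ‖v‖)
    (huv : 0 ≤ ⟪u, v⟫) (ht0 : 0 ≤ t) (ht1 : t ≤ 1) :
    c ^ 2 / 2 ≤ ‖(1 - t) • u + t • v‖ ^ 2 := by
  have hu2 : c ^ 2 ≤ ‖u‖ ^ 2 := pow_le_pow_left₀ hc hu 2
  have hv2 : c ^ 2 ≤ ‖v‖ ^ 2 := pow_le_pow_left₀ hc hv 2
  have hweights : 1 / 2 ≤ (1 - t) ^ 2 + t ^ 2 := by nlinarith [sq_nonneg (2 * t - 1)]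
  nlinarith [sq_mul_norm_sq_add_le_norm_convexComb_sq huv ht0 ht1, sq_nonneg c,
    mul_le_mul_of_nonneg_left hu2 (sq_nonneg (1 - t)), mul_le_mul_of_nonneg_left hv2 (sq_nonneg t)]

end ConvexCombination

theorem stmt_13 (m : ℕ) (gi gj fi fj : EuclideanSpace ℝ (Fin m)) (r : ℝ) (hr : 0 < r)
    (hg : ‖gi - gj‖ ≥ 2 * Real.sqrt 2 * r)
    (hf : ‖fi - fj‖ ≥ 2 * Real.sqrt 2 * r)
    (hinner : 0 ≤ inner (gi - gj) (fi - fj) (𝕜 := ℝ)) :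
    ∀ t ∈ Set.Icc (0:ℝ) 1,
      2 * r ≤ ‖(gi + t • (fi - gi)) - (gj + t • (fj - gj))‖ := by
  rintro t ⟨ht0, ht1⟩
  have hdiff : (gi + t • (fi - gi)) - (gj + t • (fj - gj)) =
      (1 - t) • (gi - gj) + t • (fi - fj) := by
    module
  have hbound := half_sq_le_norm_convexComb_sq (by positivity) hg hf hinner ht0 ht1
  have hhalf : (2 * Real.sqrt 2 * r) ^ 2 / 2 = (2 * r) ^ 2 := by
    rw [mul_pow, mul_pow, Real.sq_sqrt zero_le_two]
    ring
  rw [hhalf] at hbound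
  rw [hdiff]
  exact (pow_le_pow_iff_left₀ (by positivity) (norm_nonneg _) two_ne_zero).mp hbound
end

section
/- For a convex combination d(t) = (1-t)a + t·b of vectors a, b ∈ ℝ^m with ‖a‖ ≥ c, ‖b‖ ≥ c, and ⟨a,b⟩ ≥ 0, the minimum of ‖d(t)‖ over t ∈ [0,1] is at least c/√2. -/
theorem stmt_14 (m : ℕ) (a b : EuclideanSpace ℝ (Fin m)) (c : ℝ) (hc : 0 < c)
    (ha : c ≤ ‖a‖) (hb : c ≤ ‖b‖) (hab : 0 ≤ inner a b (𝕜 := ℝ)) :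
    ∀ t ∈ Set.Icc (0:ℝ) 1, c / Real.sqrt 2 ≤ ‖(1 - t) • a + t • b‖ := by
  intro t ht
  obtain ⟨ht0, ht1⟩ := ht
  have hsq : ‖(1 - t) • a + t • b‖ ^ 2 =
      (1 - t) ^ 2 * ‖a‖ ^ 2 + 2 * ((1 - t) * t) * inner a b (𝕜 := ℝ) + t ^ 2 * ‖b‖ ^ 2 := by
    rw [@norm_add_sq_real, real_inner_smul_left, real_inner_smul_right, norm_smul, norm_smul]
    simp [Real.norm_eq_abs, abs_of_nonneg ht0, abs_of_nonneg (by linarith : (0:ℝ) ≤ 1 - t)]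
    ring
  have h2 : Real.sqrt 2 ^ 2 = 2 := Real.sq_sqrt (by norm_num)
  have hs2 : (0:ℝ) < Real.sqrt 2 := Real.sqrt_pos.mpr (by norm_num)
  have key : (c / Real.sqrt 2) ^ 2 ≤ ‖(1 - t) • a + t • b‖ ^ 2 := by
    rw [hsq, div_pow, h2]
    have h1 : c ^ 2 ≤ ‖a‖ ^ 2 := by nlinarith [norm_nonneg a]
    have h2' : c ^ 2 ≤ ‖b‖ ^ 2 := by nlinarith [norm_nonneg b]
    nlinarith [sq_nonneg (1 - 2*t), mul_nonneg (mul_nonneg (by linarith : (0:ℝ) ≤ 1 - t) ht0) hab]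
  have hn : (0:ℝ) ≤ ‖(1 - t) • a + t • b‖ := norm_nonneg _
  nlinarith [div_nonneg hc.le hs2.le]
end
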